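/- Suppose ‖A₁‖ ≤ R, ‖A₂‖ ≤ R, ‖b‖₂ ≤ 1 and R > 4. Then for all x, y ∈ ℝ^d with ‖x‖₂ ≤ R and ‖y‖₂ ≤ R, ‖B(x) − B(y)‖ ≤ 86 R² m^{3/2} √(nd) exp(4R³) · ‖x − y‖₂. -/

import Mathlib

open Matrix BigOperators

noncomputable section

/-- entrywise ReLU on a Euclidean vector -/
def relu {k : ℕ} (x : EuclideanSpace ℝ (Fin k)) : EuclideanSpace ℝ (Fin k) :=
  WithLp.toLp 2 (fun i => max 0 (x i))

/-- entrywise exponential on a Euclidean vector -/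
def vexp {k : ℕ} (x : EuclideanSpace ℝ (Fin k)) : EuclideanSpace ℝ (Fin k) :=
  WithLp.toLp 2 (fun i => Real.exp (x i))

/-- matrix-vector product as a map between Euclidean spaces -/
def mulE {k l : ℕ} (A : Matrix (Fin k) (Fin l) ℝ) (x : EuclideanSpace ℝ (Fin l)) :
    EuclideanSpace ℝ (Fin k) :=
  WithLp.toLp 2 (fun i => ∑ j, A i j * x j)

/-- ℓ²-operator norm of a matrix -/
def opNorm {k l : ℕ} (A : Matrix (Fin k) (Fin l) ℝ) : ℝ :=
  ‖LinearMap.toContinuousLinearMap (Matrix.toEuclideanLin A)‖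

/-- indicator of positivity, entrywise: the vector 1[y > 0] -/
def ind {k : ℕ} (y : EuclideanSpace ℝ (Fin k)) : Fin k → ℝ :=
  fun i => if 0 < y i then 1 else 0

variable {n m d : ℕ}

/-- h(x) = φ(A₁ x) -/
def hfun (A₁ : Matrix (Fin n) (Fin d) ℝ) (x : EuclideanSpace ℝ (Fin d)) :
    EuclideanSpace ℝ (Fin n) := relu (mulE A₁ x)

/-- u(x) = exp(A₂ φ(A₁ x)) -/
def ufun (A₁ : Matrix (Fin n) (Fin d) ℝ) (A₂ : Matrix (Fin m) (Fin n) ℝ)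
    (x : EuclideanSpace ℝ (Fin d)) : EuclideanSpace ℝ (Fin m) :=
  vexp (mulE A₂ (hfun A₁ x))

/-- α(x) = ⟨u(x), 1_m⟩ -/
def afun (A₁ : Matrix (Fin n) (Fin d) ℝ) (A₂ : Matrix (Fin m) (Fin n) ℝ)
    (x : EuclideanSpace ℝ (Fin d)) : ℝ :=
  ∑ i, ufun A₁ A₂ x i

/-- f(x) = α(x)⁻¹ • u(x) -/
def ffun (A₁ : Matrix (Fin n) (Fin d) ℝ) (A₂ : Matrix (Fin m) (Fin n) ℝ)
    (x : EuclideanSpace ℝ (Fin d)) : EuclideanSpace ℝ (Fin m) :=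
  (afun A₁ A₂ x)⁻¹ • ufun A₁ A₂ x

/-- c(x) = f(x) - b -/
def cfun (A₁ : Matrix (Fin n) (Fin d) ℝ) (A₂ : Matrix (Fin m) (Fin n) ℝ)
    (b : EuclideanSpace ℝ (Fin m)) (x : EuclideanSpace ℝ (Fin d)) :
    EuclideanSpace ℝ (Fin m) :=
  ffun A₁ A₂ x - b

/-- the matrix B(x) appearing in the decomposition of the Hessian -/
def Bmat (A₁ : Matrix (Fin n) (Fin d) ℝ) (A₂ : Matrix (Fin m) (Fin n) ℝ)
    (b : EuclideanSpace ℝ (Fin m)) (x : EuclideanSpace ℝ (Fin d)) :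
    Matrix (Fin m) (Fin m) ℝ :=
  Matrix.diagonal (fun i => ffun A₁ A₂ x i * (ffun A₁ A₂ x i + cfun A₁ A₂ b x i))
  - Matrix.diagonal (fun i => ffun A₁ A₂ x i)
      * Matrix.vecMulVec (fun i => cfun A₁ A₂ b x i + ffun A₁ A₂ x i) (fun i => ffun A₁ A₂ x i)
  - Matrix.vecMulVec (fun i => ffun A₁ A₂ x i) (fun i => cfun A₁ A₂ b x i + ffun A₁ A₂ x i)
      * Matrix.diagonal (fun i => ffun A₁ A₂ x i)
  + (∑ i, (2 * cfun A₁ A₂ b x i + ffun A₁ A₂ x i) * ffun A₁ A₂ x i)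
      • Matrix.vecMulVec (fun i => ffun A₁ A₂ x i) (fun i => ffun A₁ A₂ x i)
  - (∑ i, cfun A₁ A₂ b x i * ffun A₁ A₂ x i)
      • Matrix.diagonal (fun i => ffun A₁ A₂ x i)

-- ## Helper lemmas: Euclidean space basics

lemma mulE_eq {k l : ℕ} (A : Matrix (Fin k) (Fin l) ℝ) (x : EuclideanSpace ℝ (Fin l)) :
    mulE A x = Matrix.toEuclideanLin A x := by
  ext i
  simp [mulE, Matrix.toEuclideanLin_apply, Matrix.mulVec, dotProduct]

lemma norm_mulE_le {k l : ℕ} (A : Matrix (Fin k) (Fin l) ℝ) (x : EuclideanSpace ℝ (Fin l)) :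
    ‖mulE A x‖ ≤ opNorm A * ‖x‖ := by
  rw [mulE_eq]
  exact (LinearMap.toContinuousLinearMap (Matrix.toEuclideanLin A)).le_opNorm x

lemma mulE_sub {k l : ℕ} (A : Matrix (Fin k) (Fin l) ℝ) (x y : EuclideanSpace ℝ (Fin l)) :
    mulE A x - mulE A y = mulE A (x - y) := by
  rw [mulE_eq, mulE_eq, mulE_eq, ← map_sub]

lemma abs_apply_le_norm {k : ℕ} (v : EuclideanSpace ℝ (Fin k)) (i : Fin k) :
    |v i| ≤ ‖v‖ := by
  rw [EuclideanSpace.norm_eq]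
  have h1 : |v i| = Real.sqrt ((v i)^2) := by rw [Real.sqrt_sq_eq_abs]
  rw [h1]
  apply Real.sqrt_le_sqrt
  calc (v i)^2 ≤ ∑ j, (v j)^2 := Finset.single_le_sum (f := fun j => (v j)^2)
        (fun j _ => sq_nonneg _) (Finset.mem_univ i)
    _ = ∑ j, ‖v j‖^2 := by simp [Real.norm_eq_abs, sq_abs]

lemma norm_le_of_abs_le {k : ℕ} (v : EuclideanSpace ℝ (Fin k)) (c : ℝ)
    (h : ∀ i, |v i| ≤ c) : ‖v‖ ≤ Real.sqrt k * c := by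
  rcases Nat.eq_zero_or_pos k with hk | hk
  · subst hk
    simp [EuclideanSpace.norm_eq]
  have hc : 0 ≤ c := le_trans (abs_nonneg _) (h ⟨0, hk⟩)
  rw [EuclideanSpace.norm_eq]
  have : ∑ i, ‖v i‖^2 ≤ (k : ℝ) * c^2 := by
    calc ∑ i, ‖v i‖^2 ≤ ∑ _i : Fin k, c^2 := by
          apply Finset.sum_le_sum
          intro i _
          rw [Real.norm_eq_abs]
          exact pow_le_pow_left₀ (abs_nonneg _) (h i) 2
      _ = (k : ℝ) * c^2 := by simp [mul_comm]
  calc Real.sqrt (∑ i, ‖v i‖^2) ≤ Real.sqrt ((k : ℝ) * c^2) := Real.sqrt_le_sqrt this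
    _ = Real.sqrt k * c := by
        rw [Real.sqrt_mul (Nat.cast_nonneg k), Real.sqrt_sq hc]

lemma norm_le_norm_of_abs_le {k : ℕ} (v w : EuclideanSpace ℝ (Fin k))
    (h : ∀ i, |v i| ≤ |w i|) : ‖v‖ ≤ ‖w‖ := by
  rw [EuclideanSpace.norm_eq, EuclideanSpace.norm_eq]
  apply Real.sqrt_le_sqrt
  apply Finset.sum_le_sum
  intro i _
  rw [Real.norm_eq_abs, Real.norm_eq_abs]
  exact pow_le_pow_left₀ (abs_nonneg _) (h i) 2

lemma sum_abs_le_sqrt_mul_norm {k : ℕ} (v : EuclideanSpace ℝ (Fin k)) :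
    ∑ i, |v i| ≤ Real.sqrt k * ‖v‖ := by
  have h1 : (∑ i, |v i|)^2 ≤ (k : ℝ) * ∑ i, |v i|^2 := by
    simpa using sq_sum_le_card_mul_sum_sq (s := Finset.univ) (f := fun i => |v i|)
  have h2 : ∑ i, |v i|^2 = ‖v‖^2 := by
    rw [EuclideanSpace.norm_eq, Real.sq_sqrt (by positivity)]
    simp [Real.norm_eq_abs]
  have h3 : (∑ i, |v i|)^2 ≤ ((Real.sqrt k) * ‖v‖)^2 := by
    rw [mul_pow, Real.sq_sqrt (Nat.cast_nonneg k), ← h2]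
    exact h1
  have h4 : (0:ℝ) ≤ Real.sqrt k * ‖v‖ := by positivity
  nlinarith [Finset.sum_nonneg (fun i (_ : i ∈ Finset.univ) => abs_nonneg (v i))]

lemma norm_le_const_mul_of_abs_le {k : ℕ} (v w : EuclideanSpace ℝ (Fin k)) (c : ℝ)
    (hc : 0 ≤ c) (h : ∀ i, |v i| ≤ c * |w i|) : ‖v‖ ≤ c * ‖w‖ := by
  have := norm_le_norm_of_abs_le v (c • w) (fun i => by
    have : (c • w) i = c * w i := rfl
    rw [this, abs_mul, abs_of_nonneg hc]
    exact h i)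
  calc ‖v‖ ≤ ‖c • w‖ := this
    _ = c * ‖w‖ := by rw [norm_smul, Real.norm_eq_abs, abs_of_nonneg hc]

-- ## scalar helpers

lemma abs_relu_sub_relu {a b : ℝ} : |max 0 a - max 0 b| ≤ |a - b| := by
  rw [max_comm 0 a, max_comm 0 b]
  exact abs_max_sub_max_le_abs a b 0

lemma abs_exp_sub_exp_le {a b M : ℝ} (ha : a ≤ M) (hb : b ≤ M) :
    |Real.exp a - Real.exp b| ≤ Real.exp M * |a - b| := by
  wlog h : b ≤ a generalizing a b
  · rw [abs_sub_comm, abs_sub_comm a b]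
    exact this hb ha (le_of_not_ge h)
  rw [abs_of_nonneg (sub_nonneg.2 (Real.exp_le_exp.2 h)), abs_of_nonneg (sub_nonneg.2 h)]
  have h1 : Real.exp a - Real.exp b ≤ Real.exp a * (a - b) := by
    have h2 := Real.add_one_le_exp (b - a)
    have h3 : Real.exp b = Real.exp a * Real.exp (b - a) := by
      rw [← Real.exp_add]; ring_nf
    nlinarith [Real.exp_pos a]
  have : Real.exp a ≤ Real.exp M := Real.exp_le_exp.2 ha
  nlinarith [sub_nonneg.2 h]

lemma mul_sub_mul_abs_le {a a' b b' A B da db : ℝ}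
    (h1 : |a| ≤ A) (h2 : |b'| ≤ B) (h3 : |a - a'| ≤ da) (h4 : |b - b'| ≤ db) :
    |a * b - a' * b'| ≤ A * db + B * da := by
  have hA : (0:ℝ) ≤ A := le_trans (abs_nonneg _) h1
  have hB : (0:ℝ) ≤ B := le_trans (abs_nonneg _) h2
  have hda : (0:ℝ) ≤ da := le_trans (abs_nonneg _) h3
  have key : a * b - a' * b' = a * (b - b') + (a - a') * b' := by ring
  rw [key]
  calc |a * (b - b') + (a - a') * b'| ≤ |a * (b - b')| + |(a - a') * b'| := abs_add_le _ _
    _ = |a| * |b - b'| + |a - a'| * |b'| := by rw [abs_mul, abs_mul]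
    _ ≤ A * db + da * B := by gcongr
    _ = A * db + B * da := by ring

lemma triple_sub_abs_le {a a' b b' c c' A B C da db dc : ℝ}
    (hb : |b| ≤ B) (hc : |c| ≤ C) (ha' : |a'| ≤ A) (hb' : |b'| ≤ B)
    (h3 : |a - a'| ≤ da) (h4 : |b - b'| ≤ db) (h5 : |c - c'| ≤ dc) :
    |a * b * c - a' * b' * c'| ≤ da * B * C + A * db * C + A * B * dc := by
  have hA : (0:ℝ) ≤ A := le_trans (abs_nonneg _) ha'
  have hB : (0:ℝ) ≤ B := le_trans (abs_nonneg _) hb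
  have hC : (0:ℝ) ≤ C := le_trans (abs_nonneg _) hc
  have hda : (0:ℝ) ≤ da := le_trans (abs_nonneg _) h3
  have hdb : (0:ℝ) ≤ db := le_trans (abs_nonneg _) h4
  have key : a * b * c - a' * b' * c'
      = (a - a') * b * c + (a' * (b - b') * c + a' * b' * (c - c')) := by ring
  rw [key]
  calc |(a - a') * b * c + (a' * (b - b') * c + a' * b' * (c - c'))|
      ≤ |(a - a') * b * c| + (|a' * (b - b') * c| + |a' * b' * (c - c')|) :=
        le_trans (abs_add_le _ _) (by gcongr; exact abs_add_le _ _)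
    _ = |a - a'| * |b| * |c| + (|a'| * |b - b'| * |c| + |a'| * |b'| * |c - c'|) := by
        rw [abs_mul, abs_mul, abs_mul, abs_mul, abs_mul, abs_mul]
    _ ≤ da * B * C + (A * db * C + A * B * dc) := by gcongr
    _ = da * B * C + A * db * C + A * B * dc := by ring

lemma opNorm_le_of_entries {k : ℕ} (M : Matrix (Fin k) (Fin k) ℝ) (a : ℝ)
    (ha : 0 ≤ a) (h : ∀ i j, |M i j| ≤ a) : opNorm M ≤ k * a := by
  unfold opNorm
  apply ContinuousLinearMap.opNorm_le_bound _ (by positivity)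
  intro v
  have key : ∀ i, |(Matrix.toEuclideanLin M v) i| ≤ a * (Real.sqrt k * ‖v‖) := by
    intro i
    have h0 : (Matrix.toEuclideanLin M v) i = mulE M v i := by rw [← mulE_eq]
    rw [h0]
    show |∑ j, M i j * v j| ≤ a * (Real.sqrt k * ‖v‖)
    calc |∑ j, M i j * v j| ≤ ∑ j, |M i j * v j| := Finset.abs_sum_le_sum_abs _ _
      _ ≤ ∑ j, a * |v j| := by
          apply Finset.sum_le_sum
          intro j _
          rw [abs_mul]
          exact mul_le_mul_of_nonneg_right (h i j) (abs_nonneg _)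
      _ = a * ∑ j, |v j| := by rw [Finset.mul_sum]
      _ ≤ a * (Real.sqrt k * ‖v‖) :=
          mul_le_mul_of_nonneg_left (sum_abs_le_sqrt_mul_norm v) ha
  have := norm_le_of_abs_le (Matrix.toEuclideanLin M v) _ key
  calc ‖LinearMap.toContinuousLinearMap (Matrix.toEuclideanLin M) v‖
      = ‖Matrix.toEuclideanLin M v‖ := rfl
    _ ≤ Real.sqrt k * (a * (Real.sqrt k * ‖v‖)) := this
    _ = (Real.sqrt k * Real.sqrt k) * a * ‖v‖ := by ring
    _ = k * a * ‖v‖ := by rw [Real.mul_self_sqrt (Nat.cast_nonneg k)]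

-- ## bounds along the softmax chain

section chain

variable {n m d : ℕ} (R : ℝ) (A₁ : Matrix (Fin n) (Fin d) ℝ) (A₂ : Matrix (Fin m) (Fin n) ℝ)

lemma norm_relu_le {k : ℕ} (v : EuclideanSpace ℝ (Fin k)) : ‖relu v‖ ≤ ‖v‖ := by
  apply norm_le_norm_of_abs_le
  intro i
  have : relu v i = max 0 (v i) := rfl
  rw [this]
  simpa using abs_relu_sub_relu (a := v i) (b := 0)

lemma relu_lip {k : ℕ} (v w : EuclideanSpace ℝ (Fin k)) :
    ‖relu v - relu w‖ ≤ ‖v - w‖ := by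
  apply norm_le_norm_of_abs_le
  intro i
  have h1 : (relu v - relu w) i = max 0 (v i) - max 0 (w i) := rfl
  have h2 : (v - w) i = v i - w i := rfl
  rw [h1, h2]
  exact abs_relu_sub_relu

lemma norm_hfun_le (hA₁ : opNorm A₁ ≤ R) (hR : 0 ≤ R) (x : EuclideanSpace ℝ (Fin d))
    (hx : ‖x‖ ≤ R) : ‖hfun A₁ x‖ ≤ R^2 := by
  calc ‖hfun A₁ x‖ ≤ ‖mulE A₁ x‖ := norm_relu_le _
    _ ≤ opNorm A₁ * ‖x‖ := norm_mulE_le _ _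
    _ ≤ R * R := by
        apply mul_le_mul hA₁ hx (norm_nonneg _) hR
    _ = R^2 := (sq R).symm

lemma hfun_lip (hA₁ : opNorm A₁ ≤ R) (x y : EuclideanSpace ℝ (Fin d)) :
    ‖hfun A₁ x - hfun A₁ y‖ ≤ R * ‖x - y‖ := by
  calc ‖hfun A₁ x - hfun A₁ y‖ ≤ ‖mulE A₁ x - mulE A₁ y‖ := relu_lip _ _
    _ = ‖mulE A₁ (x - y)‖ := by rw [mulE_sub]
    _ ≤ opNorm A₁ * ‖x - y‖ := norm_mulE_le _ _
    _ ≤ R * ‖x - y‖ := mul_le_mul_of_nonneg_right hA₁ (norm_nonneg _)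

lemma abs_z_le (hA₁ : opNorm A₁ ≤ R) (hA₂ : opNorm A₂ ≤ R) (hR : 0 ≤ R)
    (x : EuclideanSpace ℝ (Fin d)) (hx : ‖x‖ ≤ R) (i : Fin m) :
    |mulE A₂ (hfun A₁ x) i| ≤ R^3 := by
  calc |mulE A₂ (hfun A₁ x) i| ≤ ‖mulE A₂ (hfun A₁ x)‖ := abs_apply_le_norm _ _
    _ ≤ opNorm A₂ * ‖hfun A₁ x‖ := norm_mulE_le _ _
    _ ≤ R * R^2 := by
        apply mul_le_mul hA₂ (norm_hfun_le R A₁ hA₁ hR x hx) (norm_nonneg _) hR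
    _ = R^3 := by ring

lemma z_lip (hA₁ : opNorm A₁ ≤ R) (hA₂ : opNorm A₂ ≤ R) (hR : 0 ≤ R)
    (x y : EuclideanSpace ℝ (Fin d)) :
    ‖mulE A₂ (hfun A₁ x) - mulE A₂ (hfun A₁ y)‖ ≤ R^2 * ‖x - y‖ := by
  calc ‖mulE A₂ (hfun A₁ x) - mulE A₂ (hfun A₁ y)‖
      = ‖mulE A₂ (hfun A₁ x - hfun A₁ y)‖ := by rw [mulE_sub]
    _ ≤ opNorm A₂ * ‖hfun A₁ x - hfun A₁ y‖ := norm_mulE_le _ _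
    _ ≤ R * (R * ‖x - y‖) := by
        apply mul_le_mul hA₂ (hfun_lip R A₁ hA₁ x y) (norm_nonneg _) hR
    _ = R^2 * ‖x - y‖ := by ring

lemma ufun_pos (x : EuclideanSpace ℝ (Fin d)) (i : Fin m) : 0 < ufun A₁ A₂ x i :=
  Real.exp_pos _

lemma ufun_le (hA₁ : opNorm A₁ ≤ R) (hA₂ : opNorm A₂ ≤ R) (hR : 0 ≤ R)
    (x : EuclideanSpace ℝ (Fin d)) (hx : ‖x‖ ≤ R) (i : Fin m) :
    ufun A₁ A₂ x i ≤ Real.exp (R^3) := by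
  apply Real.exp_le_exp.2
  have := abs_z_le R A₁ A₂ hA₁ hA₂ hR x hx i
  exact le_trans (le_abs_self _) this

lemma ufun_ge (hA₁ : opNorm A₁ ≤ R) (hA₂ : opNorm A₂ ≤ R) (hR : 0 ≤ R)
    (x : EuclideanSpace ℝ (Fin d)) (hx : ‖x‖ ≤ R) (i : Fin m) :
    Real.exp (-(R^3)) ≤ ufun A₁ A₂ x i := by
  apply Real.exp_le_exp.2
  have := abs_z_le R A₁ A₂ hA₁ hA₂ hR x hx i
  exact neg_le_of_abs_le this

lemma ufun_lip (hA₁ : opNorm A₁ ≤ R) (hA₂ : opNorm A₂ ≤ R) (hR : 0 ≤ R)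
    (x y : EuclideanSpace ℝ (Fin d)) (hx : ‖x‖ ≤ R) (hy : ‖y‖ ≤ R) :
    ‖ufun A₁ A₂ x - ufun A₁ A₂ y‖ ≤ Real.exp (R^3) * (R^2 * ‖x - y‖) := by
  have step : ‖ufun A₁ A₂ x - ufun A₁ A₂ y‖ ≤
      Real.exp (R^3) * ‖mulE A₂ (hfun A₁ x) - mulE A₂ (hfun A₁ y)‖ := by
    apply norm_le_const_mul_of_abs_le _ _ _ (Real.exp_pos _).le
    intro i
    have h1 : (ufun A₁ A₂ x - ufun A₁ A₂ y) i
        = Real.exp (mulE A₂ (hfun A₁ x) i) - Real.exp (mulE A₂ (hfun A₁ y) i) := rfl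
    have h2 : (mulE A₂ (hfun A₁ x) - mulE A₂ (hfun A₁ y)) i
        = mulE A₂ (hfun A₁ x) i - mulE A₂ (hfun A₁ y) i := rfl
    rw [h1, h2]
    apply abs_exp_sub_exp_le
    · exact le_trans (le_abs_self _) (abs_z_le R A₁ A₂ hA₁ hA₂ hR x hx i)
    · exact le_trans (le_abs_self _) (abs_z_le R A₁ A₂ hA₁ hA₂ hR y hy i)
  calc ‖ufun A₁ A₂ x - ufun A₁ A₂ y‖
      ≤ Real.exp (R^3) * ‖mulE A₂ (hfun A₁ x) - mulE A₂ (hfun A₁ y)‖ := step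
    _ ≤ Real.exp (R^3) * (R^2 * ‖x - y‖) :=
        mul_le_mul_of_nonneg_left (z_lip R A₁ A₂ hA₁ hA₂ hR x y) (Real.exp_pos _).le

lemma afun_pos (hm : 0 < m) (x : EuclideanSpace ℝ (Fin d)) : 0 < afun A₁ A₂ x := by
  unfold afun
  apply Finset.sum_pos (fun i _ => ufun_pos A₁ A₂ x i)
  exact Finset.univ_nonempty_iff.2 (Fin.pos_iff_nonempty.mp hm)

lemma afun_ge (hA₁ : opNorm A₁ ≤ R) (hA₂ : opNorm A₂ ≤ R) (hR : 0 ≤ R)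
    (x : EuclideanSpace ℝ (Fin d)) (hx : ‖x‖ ≤ R) :
    (m : ℝ) * Real.exp (-(R^3)) ≤ afun A₁ A₂ x := by
  unfold afun
  calc (m : ℝ) * Real.exp (-(R^3)) = ∑ _i : Fin m, Real.exp (-(R^3)) := by
        simp [mul_comm]
    _ ≤ ∑ i, ufun A₁ A₂ x i :=
        Finset.sum_le_sum (fun i _ => ufun_ge R A₁ A₂ hA₁ hA₂ hR x hx i)

lemma afun_lip (hA₁ : opNorm A₁ ≤ R) (hA₂ : opNorm A₂ ≤ R) (hR : 0 ≤ R)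
    (x y : EuclideanSpace ℝ (Fin d)) (hx : ‖x‖ ≤ R) (hy : ‖y‖ ≤ R) :
    |afun A₁ A₂ x - afun A₁ A₂ y| ≤
      Real.sqrt m * (Real.exp (R^3) * (R^2 * ‖x - y‖)) := by
  have h1 : afun A₁ A₂ x - afun A₁ A₂ y = ∑ i, (ufun A₁ A₂ x - ufun A₁ A₂ y) i := by
    unfold afun
    rw [← Finset.sum_sub_distrib]
    rfl
  rw [h1]
  calc |∑ i, (ufun A₁ A₂ x - ufun A₁ A₂ y) i|
      ≤ ∑ i, |(ufun A₁ A₂ x - ufun A₁ A₂ y) i| := Finset.abs_sum_le_sum_abs _ _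
    _ ≤ Real.sqrt m * ‖ufun A₁ A₂ x - ufun A₁ A₂ y‖ := sum_abs_le_sqrt_mul_norm _
    _ ≤ Real.sqrt m * (Real.exp (R^3) * (R^2 * ‖x - y‖)) :=
        mul_le_mul_of_nonneg_left (ufun_lip R A₁ A₂ hA₁ hA₂ hR x y hx hy)
          (Real.sqrt_nonneg _)

lemma ffun_nonneg (hm : 0 < m) (x : EuclideanSpace ℝ (Fin d)) (i : Fin m) :
    0 ≤ ffun A₁ A₂ x i := by
  have : ffun A₁ A₂ x i = (afun A₁ A₂ x)⁻¹ * ufun A₁ A₂ x i := rfl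
  rw [this]
  exact mul_nonneg (inv_nonneg.2 (afun_pos A₁ A₂ hm x).le) (ufun_pos A₁ A₂ x i).le

lemma ffun_sum (hm : 0 < m) (x : EuclideanSpace ℝ (Fin d)) :
    ∑ i, ffun A₁ A₂ x i = 1 := by
  have key : ∀ i, ffun A₁ A₂ x i = (afun A₁ A₂ x)⁻¹ * ufun A₁ A₂ x i := fun i => rfl
  simp_rw [key]
  rw [← Finset.mul_sum]
  exact inv_mul_cancel₀ (afun_pos A₁ A₂ hm x).ne'

lemma ffun_le_one (hm : 0 < m) (x : EuclideanSpace ℝ (Fin d)) (i : Fin m) :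
    ffun A₁ A₂ x i ≤ 1 := by
  rw [← ffun_sum A₁ A₂ hm x]
  exact Finset.single_le_sum (fun j _ => ffun_nonneg A₁ A₂ hm x j) (Finset.mem_univ i)

lemma abs_ffun_le_one (hm : 0 < m) (x : EuclideanSpace ℝ (Fin d)) (i : Fin m) :
    |ffun A₁ A₂ x i| ≤ 1 := by
  rw [abs_of_nonneg (ffun_nonneg A₁ A₂ hm x i)]
  exact ffun_le_one A₁ A₂ hm x i

end chain

section chain2

variable {n m d : ℕ} (R : ℝ) (A₁ : Matrix (Fin n) (Fin d) ℝ) (A₂ : Matrix (Fin m) (Fin n) ℝ)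

lemma ffun_lip (hm : 0 < m) (hA₁ : opNorm A₁ ≤ R) (hA₂ : opNorm A₂ ≤ R) (hR : 0 ≤ R)
    (x y : EuclideanSpace ℝ (Fin d)) (hx : ‖x‖ ≤ R) (hy : ‖y‖ ≤ R) :
    ‖ffun A₁ A₂ x - ffun A₁ A₂ y‖ ≤
      R^2 * (Real.exp (2*R^3) + Real.exp (4*R^3)) / m * ‖x - y‖ := by
  have hmpos : (0:ℝ) < m := Nat.cast_pos.2 hm
  set δ := ‖x - y‖ with hδdef
  have hδ0 : 0 ≤ δ := norm_nonneg _
  set E := Real.exp (R^3) with hEdef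
  have hE0 : 0 < E := Real.exp_pos _
  set ax := afun A₁ A₂ x with haxdef
  set ay := afun A₁ A₂ y with haydef
  have haxp : 0 < ax := afun_pos A₁ A₂ hm x
  have hayp : 0 < ay := afun_pos A₁ A₂ hm y
  have hax : (m:ℝ) * Real.exp (-(R^3)) ≤ ax := afun_ge R A₁ A₂ hA₁ hA₂ hR x hx
  have hay : (m:ℝ) * Real.exp (-(R^3)) ≤ ay := afun_ge R A₁ A₂ hA₁ hA₂ hR y hy
  have hq : (0:ℝ) < (m:ℝ) * Real.exp (-(R^3)) := by positivity
  have decomp : ffun A₁ A₂ x - ffun A₁ A₂ y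
      = ax⁻¹ • (ufun A₁ A₂ x - ufun A₁ A₂ y) + (ax⁻¹ - ay⁻¹) • ufun A₁ A₂ y := by
    unfold ffun
    rw [smul_sub, sub_smul]
    abel
  have n1 : ‖ax⁻¹ • (ufun A₁ A₂ x - ufun A₁ A₂ y)‖ ≤ (E/m) * (E*(R^2*δ)) := by
    rw [norm_smul, Real.norm_eq_abs, abs_of_pos (inv_pos.2 haxp)]
    have h1 : ax⁻¹ ≤ E / m := by
      have heq : E / (m:ℝ) = ((m:ℝ) * Real.exp (-(R^3)))⁻¹ := by
        rw [Real.exp_neg, hEdef]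
        field_simp
      rw [heq]
      exact inv_anti₀ hq hax
    exact mul_le_mul h1 (ufun_lip R A₁ A₂ hA₁ hA₂ hR x y hx hy) (norm_nonneg _)
      (by positivity)
  have n2 : ‖(ax⁻¹ - ay⁻¹) • ufun A₁ A₂ y‖ ≤ E^4/m * (R^2*δ) := by
    rw [norm_smul, Real.norm_eq_abs]
    have hu : ‖ufun A₁ A₂ y‖ ≤ Real.sqrt m * E := by
      apply norm_le_of_abs_le
      intro i
      rw [abs_of_pos (ufun_pos A₁ A₂ y i)]
      exact ufun_le R A₁ A₂ hA₁ hA₂ hR y hy i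
    have hinv : |ax⁻¹ - ay⁻¹| ≤
        (Real.sqrt m * (E * (R^2 * δ))) / ((m:ℝ) * Real.exp (-(R^3)))^2 := by
      rw [inv_sub_inv haxp.ne' hayp.ne', abs_div]
      apply div_le_div₀ (by positivity) ?_ (by positivity) ?_
      · rw [abs_sub_comm]
        exact afun_lip R A₁ A₂ hA₁ hA₂ hR x y hx hy
      · rw [abs_of_pos (mul_pos haxp hayp), sq]
        exact mul_le_mul hax hay hq.le haxp.le
    calc |ax⁻¹ - ay⁻¹| * ‖ufun A₁ A₂ y‖
        ≤ ((Real.sqrt m * (E * (R^2 * δ))) / ((m:ℝ) * Real.exp (-(R^3)))^2)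
            * (Real.sqrt m * E) :=
          mul_le_mul hinv hu (norm_nonneg _) (by positivity)
      _ = E^4/m * (R^2*δ) := by
          have hs : Real.sqrt m * Real.sqrt m = (m:ℝ) :=
            Real.mul_self_sqrt (Nat.cast_nonneg m)
          rw [Real.exp_neg]
          field_simp
          linear_combination (E^2 * R^2 * δ) * hs
  have hE2 : Real.exp (2*R^3) = E^2 := by
    rw [hEdef, ← Real.exp_nat_mul]
    norm_num
  have hE4 : Real.exp (4*R^3) = E^4 := by
    rw [hEdef, ← Real.exp_nat_mul]
    norm_num
  calc ‖ffun A₁ A₂ x - ffun A₁ A₂ y‖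
      = ‖ax⁻¹ • (ufun A₁ A₂ x - ufun A₁ A₂ y) + (ax⁻¹ - ay⁻¹) • ufun A₁ A₂ y‖ := by
        rw [decomp]
    _ ≤ ‖ax⁻¹ • (ufun A₁ A₂ x - ufun A₁ A₂ y)‖ + ‖(ax⁻¹ - ay⁻¹) • ufun A₁ A₂ y‖ :=
        norm_add_le _ _
    _ ≤ (E/m) * (E*(R^2*δ)) + E^4/m * (R^2*δ) := add_le_add n1 n2
    _ = R^2 * (Real.exp (2*R^3) + Real.exp (4*R^3)) / m * δ := by
        rw [hE2, hE4]
        field_simp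

end chain2

section entry

variable {n m d : ℕ} (A₁ : Matrix (Fin n) (Fin d) ℝ) (A₂ : Matrix (Fin m) (Fin n) ℝ)
  (b : EuclideanSpace ℝ (Fin m))

lemma cfun_apply (x : EuclideanSpace ℝ (Fin d)) (i : Fin m) :
    cfun A₁ A₂ b x i = ffun A₁ A₂ x i - b i := rfl

lemma S_abs_le (hm : 0 < m) (hb : ‖b‖ ≤ 1) (x : EuclideanSpace ℝ (Fin d)) :
    |∑ i, (2 * cfun A₁ A₂ b x i + ffun A₁ A₂ x i) * ffun A₁ A₂ x i| ≤ 5 := by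
  calc |∑ i, (2 * cfun A₁ A₂ b x i + ffun A₁ A₂ x i) * ffun A₁ A₂ x i|
      ≤ ∑ i, |(2 * cfun A₁ A₂ b x i + ffun A₁ A₂ x i) * ffun A₁ A₂ x i| :=
        Finset.abs_sum_le_sum_abs _ _
    _ ≤ ∑ i, 5 * ffun A₁ A₂ x i := by
        apply Finset.sum_le_sum
        intro i _
        rw [abs_mul, abs_of_nonneg (ffun_nonneg A₁ A₂ hm x i)]
        apply mul_le_mul_of_nonneg_right _ (ffun_nonneg A₁ A₂ hm x i)
        rw [cfun_apply]
        have h1 := abs_ffun_le_one A₁ A₂ hm x i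
        have h2 : |b i| ≤ 1 := le_trans (abs_apply_le_norm b i) hb
        calc |2 * (ffun A₁ A₂ x i - b i) + ffun A₁ A₂ x i|
            = |3 * ffun A₁ A₂ x i - 2 * b i| := by ring_nf
          _ ≤ 3 * |ffun A₁ A₂ x i| + 2 * |b i| := by
              calc |3 * ffun A₁ A₂ x i - 2 * b i|
                  ≤ |3 * ffun A₁ A₂ x i| + |2 * b i| := abs_sub _ _
                _ = 3 * |ffun A₁ A₂ x i| + 2 * |b i| := by
                    rw [abs_mul, abs_mul]; norm_num
          _ ≤ 5 := by linarith
    _ = 5 * ∑ i, ffun A₁ A₂ x i := by rw [Finset.mul_sum]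
    _ = 5 := by rw [ffun_sum A₁ A₂ hm x]; norm_num

lemma T_abs_le (hm : 0 < m) (hb : ‖b‖ ≤ 1) (x : EuclideanSpace ℝ (Fin d)) :
    |∑ i, cfun A₁ A₂ b x i * ffun A₁ A₂ x i| ≤ 2 := by
  calc |∑ i, cfun A₁ A₂ b x i * ffun A₁ A₂ x i|
      ≤ ∑ i, |cfun A₁ A₂ b x i * ffun A₁ A₂ x i| := Finset.abs_sum_le_sum_abs _ _
    _ ≤ ∑ i, 2 * ffun A₁ A₂ x i := by
        apply Finset.sum_le_sum
        intro i _
        rw [abs_mul, abs_of_nonneg (ffun_nonneg A₁ A₂ hm x i)]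
        apply mul_le_mul_of_nonneg_right _ (ffun_nonneg A₁ A₂ hm x i)
        rw [cfun_apply]
        have h1 := abs_ffun_le_one A₁ A₂ hm x i
        have h2 : |b i| ≤ 1 := le_trans (abs_apply_le_norm b i) hb
        calc |ffun A₁ A₂ x i - b i| ≤ |ffun A₁ A₂ x i| + |b i| := abs_sub _ _
          _ ≤ 2 := by linarith
    _ = 2 * ∑ i, ffun A₁ A₂ x i := by rw [Finset.mul_sum]
    _ = 2 := by rw [ffun_sum A₁ A₂ hm x]; norm_num

lemma S_lip (hm : 0 < m) (hb : ‖b‖ ≤ 1) (x y : EuclideanSpace ℝ (Fin d)) :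
    |(∑ i, (2 * cfun A₁ A₂ b x i + ffun A₁ A₂ x i) * ffun A₁ A₂ x i)
      - ∑ i, (2 * cfun A₁ A₂ b y i + ffun A₁ A₂ y i) * ffun A₁ A₂ y i|
      ≤ 8 * (Real.sqrt m * ‖ffun A₁ A₂ x - ffun A₁ A₂ y‖) := by
  rw [← Finset.sum_sub_distrib]
  calc |∑ i, ((2 * cfun A₁ A₂ b x i + ffun A₁ A₂ x i) * ffun A₁ A₂ x i
          - (2 * cfun A₁ A₂ b y i + ffun A₁ A₂ y i) * ffun A₁ A₂ y i)|
      ≤ ∑ i, |(2 * cfun A₁ A₂ b x i + ffun A₁ A₂ x i) * ffun A₁ A₂ x i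
          - (2 * cfun A₁ A₂ b y i + ffun A₁ A₂ y i) * ffun A₁ A₂ y i| :=
        Finset.abs_sum_le_sum_abs _ _
    _ ≤ ∑ i, 8 * |(ffun A₁ A₂ x - ffun A₁ A₂ y) i| := by
        apply Finset.sum_le_sum
        intro i _
        have hsub : (ffun A₁ A₂ x - ffun A₁ A₂ y) i = ffun A₁ A₂ x i - ffun A₁ A₂ y i :=
          rfl
        rw [hsub, cfun_apply, cfun_apply]
        have key : (2 * (ffun A₁ A₂ x i - b i) + ffun A₁ A₂ x i) * ffun A₁ A₂ x i
            - (2 * (ffun A₁ A₂ y i - b i) + ffun A₁ A₂ y i) * ffun A₁ A₂ y i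
            = (3 * (ffun A₁ A₂ x i + ffun A₁ A₂ y i) - 2 * b i)
              * (ffun A₁ A₂ x i - ffun A₁ A₂ y i) := by ring
        rw [key, abs_mul]
        apply mul_le_mul_of_nonneg_right _ (abs_nonneg _)
        have h1 := abs_ffun_le_one A₁ A₂ hm x i
        have h2 := abs_ffun_le_one A₁ A₂ hm y i
        have h3 : |b i| ≤ 1 := le_trans (abs_apply_le_norm b i) hb
        have h4 := abs_add_le (ffun A₁ A₂ x i) (ffun A₁ A₂ y i)
        calc |3 * (ffun A₁ A₂ x i + ffun A₁ A₂ y i) - 2 * b i|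
            ≤ |3 * (ffun A₁ A₂ x i + ffun A₁ A₂ y i)| + |2 * b i| := abs_sub _ _
          _ = 3 * |ffun A₁ A₂ x i + ffun A₁ A₂ y i| + 2 * |b i| := by
              rw [abs_mul, abs_mul]; norm_num
          _ ≤ 8 := by linarith
    _ = 8 * ∑ i, |(ffun A₁ A₂ x - ffun A₁ A₂ y) i| := by rw [Finset.mul_sum]
    _ ≤ 8 * (Real.sqrt m * ‖ffun A₁ A₂ x - ffun A₁ A₂ y‖) :=
        mul_le_mul_of_nonneg_left (sum_abs_le_sqrt_mul_norm _) (by norm_num)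

lemma T_lip (hm : 0 < m) (hb : ‖b‖ ≤ 1) (x y : EuclideanSpace ℝ (Fin d)) :
    |(∑ i, cfun A₁ A₂ b x i * ffun A₁ A₂ x i)
      - ∑ i, cfun A₁ A₂ b y i * ffun A₁ A₂ y i|
      ≤ 3 * (Real.sqrt m * ‖ffun A₁ A₂ x - ffun A₁ A₂ y‖) := by
  rw [← Finset.sum_sub_distrib]
  calc |∑ i, (cfun A₁ A₂ b x i * ffun A₁ A₂ x i - cfun A₁ A₂ b y i * ffun A₁ A₂ y i)|
      ≤ ∑ i, |cfun A₁ A₂ b x i * ffun A₁ A₂ x i - cfun A₁ A₂ b y i * ffun A₁ A₂ y i| :=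
        Finset.abs_sum_le_sum_abs _ _
    _ ≤ ∑ i, 3 * |(ffun A₁ A₂ x - ffun A₁ A₂ y) i| := by
        apply Finset.sum_le_sum
        intro i _
        have hsub : (ffun A₁ A₂ x - ffun A₁ A₂ y) i = ffun A₁ A₂ x i - ffun A₁ A₂ y i :=
          rfl
        rw [hsub, cfun_apply, cfun_apply]
        have key : (ffun A₁ A₂ x i - b i) * ffun A₁ A₂ x i
            - (ffun A₁ A₂ y i - b i) * ffun A₁ A₂ y i
            = (ffun A₁ A₂ x i + ffun A₁ A₂ y i - b i)
              * (ffun A₁ A₂ x i - ffun A₁ A₂ y i) := by ring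
        rw [key, abs_mul]
        apply mul_le_mul_of_nonneg_right _ (abs_nonneg _)
        have h1 := abs_ffun_le_one A₁ A₂ hm x i
        have h2 := abs_ffun_le_one A₁ A₂ hm y i
        have h3 : |b i| ≤ 1 := le_trans (abs_apply_le_norm b i) hb
        have h4 := abs_add_le (ffun A₁ A₂ x i) (ffun A₁ A₂ y i)
        calc |ffun A₁ A₂ x i + ffun A₁ A₂ y i - b i|
            ≤ |ffun A₁ A₂ x i + ffun A₁ A₂ y i| + |b i| := abs_sub _ _
          _ ≤ 3 := by linarith
    _ = 3 * ∑ i, |(ffun A₁ A₂ x - ffun A₁ A₂ y) i| := by rw [Finset.mul_sum]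
    _ ≤ 3 * (Real.sqrt m * ‖ffun A₁ A₂ x - ffun A₁ A₂ y‖) :=
        mul_le_mul_of_nonneg_left (sum_abs_le_sqrt_mul_norm _) (by norm_num)

lemma Bmat_apply (x : EuclideanSpace ℝ (Fin d)) (i j : Fin m) :
    Bmat A₁ A₂ b x i j =
      (if i = j then ffun A₁ A₂ x i * (ffun A₁ A₂ x i + cfun A₁ A₂ b x i) else 0)
      - ffun A₁ A₂ x i * (cfun A₁ A₂ b x i + ffun A₁ A₂ x i) * ffun A₁ A₂ x j
      - ffun A₁ A₂ x i * (cfun A₁ A₂ b x j + ffun A₁ A₂ x j) * ffun A₁ A₂ x j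
      + (∑ k, (2 * cfun A₁ A₂ b x k + ffun A₁ A₂ x k) * ffun A₁ A₂ x k)
          * (ffun A₁ A₂ x i * ffun A₁ A₂ x j)
      - (∑ k, cfun A₁ A₂ b x k * ffun A₁ A₂ x k)
          * (if i = j then ffun A₁ A₂ x i else 0) := by
  unfold Bmat
  rcases eq_or_ne i j with h | h
  · subst h
    simp [Matrix.sub_apply, Matrix.add_apply, Matrix.smul_apply, Matrix.diagonal_mul,
      Matrix.mul_diagonal, Matrix.vecMulVec_apply, Matrix.diagonal_apply_eq,
      Matrix.of_apply, smul_eq_mul]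
    ring
  · simp [Matrix.sub_apply, Matrix.add_apply, Matrix.smul_apply, Matrix.diagonal_mul,
      Matrix.mul_diagonal, Matrix.vecMulVec_apply, Matrix.diagonal_apply_ne _ h,
      Matrix.of_apply, smul_eq_mul, h]
    ring

end entry

section entrydiff

variable {n m d : ℕ} (A₁ : Matrix (Fin n) (Fin d) ℝ) (A₂ : Matrix (Fin m) (Fin n) ℝ)
  (b : EuclideanSpace ℝ (Fin m))

set_option maxHeartbeats 1000000 in
lemma entry_diff (hm : 0 < m) (hb : ‖b‖ ≤ 1) (x y : EuclideanSpace ℝ (Fin d)) (P : ℝ)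
    (hP : ‖ffun A₁ A₂ x - ffun A₁ A₂ y‖ ≤ P) (i j : Fin m) :
    |Bmat A₁ A₂ b x i j - Bmat A₁ A₂ b y i j| ≤ 33 * P + 11 * (Real.sqrt m * P) := by
  have hP0 : 0 ≤ P := le_trans (norm_nonneg _) hP
  have hsmP : 0 ≤ Real.sqrt m * P := mul_nonneg (Real.sqrt_nonneg _) hP0
  have hdF : ∀ k, |ffun A₁ A₂ x k - ffun A₁ A₂ y k| ≤ P := by
    intro k
    have h0 : ffun A₁ A₂ x k - ffun A₁ A₂ y k = (ffun A₁ A₂ x - ffun A₁ A₂ y) k := rfl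
    rw [h0]
    exact le_trans (abs_apply_le_norm _ _) hP
  have hFx1 : ∀ k, |ffun A₁ A₂ x k| ≤ 1 := abs_ffun_le_one A₁ A₂ hm x
  have hFy1 : ∀ k, |ffun A₁ A₂ y k| ≤ 1 := abs_ffun_le_one A₁ A₂ hm y
  have hbk : ∀ k, |b k| ≤ 1 := fun k => le_trans (abs_apply_le_norm b k) hb
  have hGx : ∀ k, |cfun A₁ A₂ b x k + ffun A₁ A₂ x k| ≤ 3 := by
    intro k
    rw [cfun_apply]
    calc |ffun A₁ A₂ x k - b k + ffun A₁ A₂ x k|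
        ≤ |ffun A₁ A₂ x k| + |b k| + |ffun A₁ A₂ x k| := by
          calc |ffun A₁ A₂ x k - b k + ffun A₁ A₂ x k|
              ≤ |ffun A₁ A₂ x k - b k| + |ffun A₁ A₂ x k| := abs_add_le _ _
            _ ≤ (|ffun A₁ A₂ x k| + |b k|) + |ffun A₁ A₂ x k| := by
                have := abs_sub (ffun A₁ A₂ x k) (b k)
                linarith
      _ ≤ 3 := by have := hFx1 k; have := hbk k; linarith
  have hGy : ∀ k, |cfun A₁ A₂ b y k + ffun A₁ A₂ y k| ≤ 3 := by
    intro k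
    rw [cfun_apply]
    calc |ffun A₁ A₂ y k - b k + ffun A₁ A₂ y k|
        ≤ |ffun A₁ A₂ y k - b k| + |ffun A₁ A₂ y k| := abs_add_le _ _
      _ ≤ 3 := by
          have h5 := abs_sub (ffun A₁ A₂ y k) (b k)
          have := hFy1 k; have := hbk k; linarith
  have hdG : ∀ k, |(cfun A₁ A₂ b x k + ffun A₁ A₂ x k)
      - (cfun A₁ A₂ b y k + ffun A₁ A₂ y k)| ≤ 2 * P := by
    intro k
    rw [cfun_apply, cfun_apply]
    have key : ffun A₁ A₂ x k - b k + ffun A₁ A₂ x k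
        - (ffun A₁ A₂ y k - b k + ffun A₁ A₂ y k)
        = 2 * (ffun A₁ A₂ x k - ffun A₁ A₂ y k) := by ring
    rw [key, abs_mul]
    have := hdF k
    rw [abs_two]
    linarith
  -- the five terms
  have d1 : |(if i = j then ffun A₁ A₂ x i * (ffun A₁ A₂ x i + cfun A₁ A₂ b x i) else 0)
      - (if i = j then ffun A₁ A₂ y i * (ffun A₁ A₂ y i + cfun A₁ A₂ b y i) else 0)|
      ≤ 1 * (2*P) + 3 * P := by
    rcases eq_or_ne i j with h | h
    · simp only [h, if_pos]
      subst h
      apply mul_sub_mul_abs_le (hFx1 i)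
      · rw [add_comm]
        exact hGy i
      · exact hdF i
      · rw [add_comm (ffun A₁ A₂ x i), add_comm (ffun A₁ A₂ y i)]
        exact hdG i
    · simp only [h, if_neg, if_false]
      simp
      linarith
  have d2 : |ffun A₁ A₂ x i * (cfun A₁ A₂ b x i + ffun A₁ A₂ x i) * ffun A₁ A₂ x j
      - ffun A₁ A₂ y i * (cfun A₁ A₂ b y i + ffun A₁ A₂ y i) * ffun A₁ A₂ y j|
      ≤ P * 3 * 1 + 1 * (2*P) * 1 + 1 * 3 * P :=
    triple_sub_abs_le (hGx i) (hFx1 j) (hFy1 i) (hGy i) (hdF i) (hdG i) (hdF j)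
  have d3 : |ffun A₁ A₂ x i * (cfun A₁ A₂ b x j + ffun A₁ A₂ x j) * ffun A₁ A₂ x j
      - ffun A₁ A₂ y i * (cfun A₁ A₂ b y j + ffun A₁ A₂ y j) * ffun A₁ A₂ y j|
      ≤ P * 3 * 1 + 1 * (2*P) * 1 + 1 * 3 * P :=
    triple_sub_abs_le (hGx j) (hFx1 j) (hFy1 i) (hGy j) (hdF i) (hdG j) (hdF j)
  have d4 : |(∑ k, (2 * cfun A₁ A₂ b x k + ffun A₁ A₂ x k) * ffun A₁ A₂ x k)
        * (ffun A₁ A₂ x i * ffun A₁ A₂ x j)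
      - (∑ k, (2 * cfun A₁ A₂ b y k + ffun A₁ A₂ y k) * ffun A₁ A₂ y k)
        * (ffun A₁ A₂ y i * ffun A₁ A₂ y j)|
      ≤ (8 * (Real.sqrt m * P)) * 1 * 1 + 5 * P * 1 + 5 * 1 * P := by
    have hre : ∀ z : EuclideanSpace ℝ (Fin d),
        (∑ k, (2 * cfun A₁ A₂ b z k + ffun A₁ A₂ z k) * ffun A₁ A₂ z k)
          * (ffun A₁ A₂ z i * ffun A₁ A₂ z j)
        = (∑ k, (2 * cfun A₁ A₂ b z k + ffun A₁ A₂ z k) * ffun A₁ A₂ z k)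
          * ffun A₁ A₂ z i * ffun A₁ A₂ z j := fun z => by ring
    rw [hre x, hre y]
    apply triple_sub_abs_le (hFx1 i) (hFx1 j) (S_abs_le A₁ A₂ b hm hb y) (hFy1 i)
      _ (hdF i) (hdF j)
    calc |(∑ k, (2 * cfun A₁ A₂ b x k + ffun A₁ A₂ x k) * ffun A₁ A₂ x k)
        - ∑ k, (2 * cfun A₁ A₂ b y k + ffun A₁ A₂ y k) * ffun A₁ A₂ y k|
        ≤ 8 * (Real.sqrt m * ‖ffun A₁ A₂ x - ffun A₁ A₂ y‖) := S_lip A₁ A₂ b hm hb x y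
      _ ≤ 8 * (Real.sqrt m * P) := by
          apply mul_le_mul_of_nonneg_left _ (by norm_num)
          exact mul_le_mul_of_nonneg_left hP (Real.sqrt_nonneg _)
  have d5 : |(∑ k, cfun A₁ A₂ b x k * ffun A₁ A₂ x k)
        * (if i = j then ffun A₁ A₂ x i else 0)
      - (∑ k, cfun A₁ A₂ b y k * ffun A₁ A₂ y k)
        * (if i = j then ffun A₁ A₂ y i else 0)|
      ≤ 2 * P + 1 * (3 * (Real.sqrt m * P)) := by
    rcases eq_or_ne i j with h | h
    · simp only [h, if_pos]
      subst h
      apply mul_sub_mul_abs_le (T_abs_le A₁ A₂ b hm hb x) (hFy1 i) _ (hdF i)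
      calc |(∑ k, cfun A₁ A₂ b x k * ffun A₁ A₂ x k)
          - ∑ k, cfun A₁ A₂ b y k * ffun A₁ A₂ y k|
          ≤ 3 * (Real.sqrt m * ‖ffun A₁ A₂ x - ffun A₁ A₂ y‖) := T_lip A₁ A₂ b hm hb x y
        _ ≤ 3 * (Real.sqrt m * P) := by
            apply mul_le_mul_of_nonneg_left _ (by norm_num)
            exact mul_le_mul_of_nonneg_left hP (Real.sqrt_nonneg _)
    · simp only [h, if_neg, if_false]
      simp
      linarith
  have expand : Bmat A₁ A₂ b x i j - Bmat A₁ A₂ b y i j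
      = ((if i = j then ffun A₁ A₂ x i * (ffun A₁ A₂ x i + cfun A₁ A₂ b x i) else 0)
          - (if i = j then ffun A₁ A₂ y i * (ffun A₁ A₂ y i + cfun A₁ A₂ b y i) else 0))
        - (ffun A₁ A₂ x i * (cfun A₁ A₂ b x i + ffun A₁ A₂ x i) * ffun A₁ A₂ x j
          - ffun A₁ A₂ y i * (cfun A₁ A₂ b y i + ffun A₁ A₂ y i) * ffun A₁ A₂ y j)
        - (ffun A₁ A₂ x i * (cfun A₁ A₂ b x j + ffun A₁ A₂ x j) * ffun A₁ A₂ x j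
          - ffun A₁ A₂ y i * (cfun A₁ A₂ b y j + ffun A₁ A₂ y j) * ffun A₁ A₂ y j)
        + ((∑ k, (2 * cfun A₁ A₂ b x k + ffun A₁ A₂ x k) * ffun A₁ A₂ x k)
            * (ffun A₁ A₂ x i * ffun A₁ A₂ x j)
          - (∑ k, (2 * cfun A₁ A₂ b y k + ffun A₁ A₂ y k) * ffun A₁ A₂ y k)
            * (ffun A₁ A₂ y i * ffun A₁ A₂ y j))
        - ((∑ k, cfun A₁ A₂ b x k * ffun A₁ A₂ x k)
            * (if i = j then ffun A₁ A₂ x i else 0)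
          - (∑ k, cfun A₁ A₂ b y k * ffun A₁ A₂ y k)
            * (if i = j then ffun A₁ A₂ y i else 0)) := by
    rw [Bmat_apply, Bmat_apply]
    ring
  rw [expand]
  have habs : ∀ p q : ℝ, |p - q| ≤ |p| + |q| := fun p q => abs_sub p q
  set D1 := (if i = j then ffun A₁ A₂ x i * (ffun A₁ A₂ x i + cfun A₁ A₂ b x i) else 0)
      - (if i = j then ffun A₁ A₂ y i * (ffun A₁ A₂ y i + cfun A₁ A₂ b y i) else 0)
  set D2 := ffun A₁ A₂ x i * (cfun A₁ A₂ b x i + ffun A₁ A₂ x i) * ffun A₁ A₂ x j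
      - ffun A₁ A₂ y i * (cfun A₁ A₂ b y i + ffun A₁ A₂ y i) * ffun A₁ A₂ y j
  set D3 := ffun A₁ A₂ x i * (cfun A₁ A₂ b x j + ffun A₁ A₂ x j) * ffun A₁ A₂ x j
      - ffun A₁ A₂ y i * (cfun A₁ A₂ b y j + ffun A₁ A₂ y j) * ffun A₁ A₂ y j
  set D4 := (∑ k, (2 * cfun A₁ A₂ b x k + ffun A₁ A₂ x k) * ffun A₁ A₂ x k)
        * (ffun A₁ A₂ x i * ffun A₁ A₂ x j)
      - (∑ k, (2 * cfun A₁ A₂ b y k + ffun A₁ A₂ y k) * ffun A₁ A₂ y k)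
        * (ffun A₁ A₂ y i * ffun A₁ A₂ y j)
  set D5 := (∑ k, cfun A₁ A₂ b x k * ffun A₁ A₂ x k)
        * (if i = j then ffun A₁ A₂ x i else 0)
      - (∑ k, cfun A₁ A₂ b y k * ffun A₁ A₂ y k)
        * (if i = j then ffun A₁ A₂ y i else 0)
  calc |D1 - D2 - D3 + D4 - D5| ≤ |D1 - D2 - D3 + D4| + |D5| := habs _ _
    _ ≤ (|D1 - D2 - D3| + |D4|) + |D5| := by
        have := abs_add_le (D1 - D2 - D3) D4
        linarith
    _ ≤ ((|D1 - D2| + |D3|) + |D4|) + |D5| := by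
        have := habs (D1 - D2) D3
        linarith
    _ ≤ (((|D1| + |D2|) + |D3|) + |D4|) + |D5| := by
        have := habs D1 D2
        linarith
    _ ≤ 33 * P + 11 * (Real.sqrt m * P) := by
        have e1 := d1; have e2 := d2; have e3 := d3; have e4 := d4; have e5 := d5
        linarith

end entrydiff

/-- if ‖A₁‖ ≤ R, ‖A₂‖ ≤ R, ‖b‖₂ ≤ 1 and R > 4, then for all x, y in the
radius-R ball, ‖B(x) − B(y)‖ ≤ 86 R² m^{3/2} √(nd) exp(4R³) ‖x − y‖₂. -/
theorem statement10 (n m d : ℕ) (hn : 0 < n) (hm : 0 < m) (hd : 0 < d) (R : ℝ)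
    (A₁ : Matrix (Fin n) (Fin d) ℝ) (A₂ : Matrix (Fin m) (Fin n) ℝ)
    (b : EuclideanSpace ℝ (Fin m))
    (hA₁ : opNorm A₁ ≤ R) (hA₂ : opNorm A₂ ≤ R) (hb : ‖b‖ ≤ 1) (hR : 4 < R) :
    ∀ x y : EuclideanSpace ℝ (Fin d), ‖x‖ ≤ R → ‖y‖ ≤ R →
      opNorm (Bmat A₁ A₂ b x - Bmat A₁ A₂ b y) ≤
        86 * R ^ 2 * ((m : ℝ) * Real.sqrt m) * Real.sqrt ((n : ℝ) * d)
          * Real.exp (4 * R ^ 3) * ‖x - y‖ := by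
  intro x y hx hy
  have hmpos : (0:ℝ) < m := Nat.cast_pos.2 hm
  have hm1 : (1:ℝ) ≤ m := by exact_mod_cast hm
  have hR0 : (0:ℝ) ≤ R := by linarith
  set δ := ‖x - y‖ with hδdef
  have hδ0 : 0 ≤ δ := norm_nonneg _
  set P := R^2 * (Real.exp (2*R^3) + Real.exp (4*R^3)) / m * δ with hPdef
  have hP0 : 0 ≤ P := by positivity
  have hP : ‖ffun A₁ A₂ x - ffun A₁ A₂ y‖ ≤ P :=
    ffun_lip R A₁ A₂ hm hA₁ hA₂ hR0 x y hx hy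
  have hentry : ∀ i j, |(Bmat A₁ A₂ b x - Bmat A₁ A₂ b y) i j|
      ≤ 33 * P + 11 * (Real.sqrt m * P) := by
    intro i j
    rw [Matrix.sub_apply]
    exact entry_diff A₁ A₂ b hm hb x y P hP i j
  have hop : opNorm (Bmat A₁ A₂ b x - Bmat A₁ A₂ b y)
      ≤ m * (33 * P + 11 * (Real.sqrt m * P)) :=
    opNorm_le_of_entries _ _ (by positivity) hentry
  have hsm1 : (1:ℝ) ≤ Real.sqrt m := by
    rw [show (1:ℝ) = Real.sqrt 1 from Real.sqrt_one.symm]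
    exact Real.sqrt_le_sqrt hm1
  have hnd1 : (1:ℝ) ≤ Real.sqrt ((n:ℝ) * d) := by
    rw [show (1:ℝ) = Real.sqrt 1 from Real.sqrt_one.symm]
    apply Real.sqrt_le_sqrt
    have h1 : (1:ℝ) ≤ n := by exact_mod_cast hn
    have h2 : (1:ℝ) ≤ d := by exact_mod_cast hd
    nlinarith
  have hexp2 : 2 * Real.exp (2*R^3) ≤ Real.exp (4*R^3) := by
    have h64 : (64:ℝ) < R^3 := by
      have := pow_lt_pow_left₀ hR (by norm_num : (0:ℝ) ≤ 4) (by norm_num : 3 ≠ 0)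
      norm_num at this
      linarith
    have hge := Real.add_one_le_exp (2*R^3)
    have h2 : (2:ℝ) ≤ Real.exp (2*R^3) := by linarith
    calc 2 * Real.exp (2*R^3) ≤ Real.exp (2*R^3) * Real.exp (2*R^3) := by
          nlinarith [Real.exp_pos (2*R^3)]
      _ = Real.exp (4*R^3) := by rw [← Real.exp_add]; ring_nf
  have hPs : P ≤ Real.sqrt m * P := by nlinarith
  calc opNorm (Bmat A₁ A₂ b x - Bmat A₁ A₂ b y)
      ≤ m * (33 * P + 11 * (Real.sqrt m * P)) := hop
    _ ≤ m * (33 * (Real.sqrt m * P) + 11 * (Real.sqrt m * P)) := by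
        apply mul_le_mul_of_nonneg_left _ hmpos.le
        linarith
    _ = 44 * ((m:ℝ) * Real.sqrt m) * P := by ring
    _ = 44 * Real.sqrt m * (R^2 * (Real.exp (2*R^3) + Real.exp (4*R^3))) * δ := by
        rw [hPdef]
        field_simp
    _ ≤ 66 * Real.sqrt m * (R^2 * Real.exp (4*R^3)) * δ := by
        have key : 44 * (Real.exp (2*R^3) + Real.exp (4*R^3))
            ≤ 66 * Real.exp (4*R^3) := by linarith
        calc 44 * Real.sqrt m * (R^2 * (Real.exp (2*R^3) + Real.exp (4*R^3))) * δ
            = (Real.sqrt m * R^2 * δ) * (44 * (Real.exp (2*R^3) + Real.exp (4*R^3))) := by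
              ring
          _ ≤ (Real.sqrt m * R^2 * δ) * (66 * Real.exp (4*R^3)) :=
              mul_le_mul_of_nonneg_left key (by positivity)
          _ = 66 * Real.sqrt m * (R^2 * Real.exp (4*R^3)) * δ := by ring
    _ ≤ 86 * R ^ 2 * ((m : ℝ) * Real.sqrt m) * Real.sqrt ((n : ℝ) * d)
          * Real.exp (4 * R ^ 3) * δ := by
        have hz0 : (0:ℝ) ≤ ((m:ℝ) * Real.sqrt m) * Real.sqrt ((n:ℝ)*d) := by positivity
        have h1 : Real.sqrt m ≤ (m:ℝ) * Real.sqrt m := by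
          nlinarith [Real.sqrt_nonneg (m:ℝ)]
        have h2 : (m:ℝ) * Real.sqrt m ≤ ((m:ℝ) * Real.sqrt m) * Real.sqrt ((n:ℝ)*d) := by
          nlinarith [mul_nonneg (Nat.cast_nonneg m : (0:ℝ) ≤ m) (Real.sqrt_nonneg (m:ℝ))]
        have key : 66 * Real.sqrt m
            ≤ 86 * (((m:ℝ) * Real.sqrt m) * Real.sqrt ((n:ℝ)*d)) := by linarith
        calc 66 * Real.sqrt m * (R^2 * Real.exp (4*R^3)) * δ
            = (R^2 * Real.exp (4*R^3) * δ) * (66 * Real.sqrt m) := by ring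
          _ ≤ (R^2 * Real.exp (4*R^3) * δ)
              * (86 * (((m:ℝ) * Real.sqrt m) * Real.sqrt ((n:ℝ)*d))) :=
              mul_le_mul_of_nonneg_left key (by positivity)
          _ = 86 * R ^ 2 * ((m : ℝ) * Real.sqrt m) * Real.sqrt ((n : ℝ) * d)
              * Real.exp (4 * R ^ 3) * δ := by ring

end
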